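/- Let A_e = V Λ_e V⁻¹ with V unitary and λ_{e_k} = e^{-2πi(k-1)/N}, and suppose |y_F(n)| > 0 for all n, where y_F = V⁻¹ y. Then the graph Wiener-Hopf system R^G_{yy} h = r^G_{xy} (with R^G_{yy}(i,j) = yᴴ(A_e^{i-1})ᴴ A_e^{j-1} y and r^G_{xy}(i) = yᴴ(A_e^{i-1})ᴴ x, L = N taps) has the unique solution given in the DFT domain by h_DFT(i) = r_{xy,DFT}(i) / (N |y_F(i)|²), where h_DFT = W h, r_{xy,DFT} = W r^G_{xy}, and W is the normalized N-point DFT matrix. -/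

import Mathlib

/-!
Put `y_F = Vᴴ y`, `ζ = exp (-2πi/N)` and let `M = (ζ^(k·j))_{k,j}` be the Vandermonde matrix of
the eigenvalues `ζ^k` of `A_e`. Since `V` is unitary,
`(A_eⁱ)ᴴ A_eʲ = V diag(conj(ζ^(ki)) ζ^(kj)) Vᴴ`, so `R = Mᴴ diag(|y_F|²) M` and `r = Mᴴ (conj y_F ⊙ x_F)`. As `ζ` is a primitive `N`-th root of
unity, `M Mᴴ = N • 1`, i.e. `M = √N W` is the unnormalized DFT matrix. Hence `R` is invertible,
`R h = r` reduces to `|y_F|² ⊙ M h = conj y_F ⊙ x_F`, and `M r = N (conj y_F ⊙ x_F)`.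
-/

open Matrix Complex

section UnitaryDiagonalization

variable {n R : Type*} [Fintype n] [DecidableEq n] [CommRing R] [StarRing R]

lemma star_dotProduct_conj_diagonal_mulVec (V : Matrix n n R) (c : n → R) (y w : n → R) :
    star y ⬝ᵥ ((V * diagonal c * Vᴴ) *ᵥ w) = ∑ k, star ((Vᴴ *ᵥ y) k) * c k * (Vᴴ *ᵥ w) k := by
  have hyF : star y ᵥ* V = star (Vᴴ *ᵥ y) := by rw [star_mulVec, conjTranspose_conjTranspose]
  rw [← mulVec_mulVec, ← mulVec_mulVec, dotProduct_mulVec, hyF]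
  simp only [dotProduct, mulVec_diagonal, Pi.star_apply, mul_assoc]

lemma conj_diagonal_pow_of_mem_unitaryGroup {V : Matrix n n R} (hV : V ∈ unitaryGroup n R)
    (c : n → R) (m : ℕ) : (V * diagonal c * Vᴴ) ^ m = V * diagonal (c ^ m) * Vᴴ := by
  rw [← diagonal_pow]
  exact Units.conj_pow (Unitary.toUnits ⟨V, hV⟩) _ m

lemma conjTranspose_pow_mul_pow_of_mem_unitaryGroup {V : Matrix n n R}
    (hV : V ∈ unitaryGroup n R) (c : n → R) (i j : ℕ) :
    ((V * diagonal c * Vᴴ) ^ i)ᴴ * (V * diagonal c * Vᴴ) ^ j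
      = V * diagonal (fun k => star (c k ^ i) * c k ^ j) * Vᴴ := by
  have hVV : Vᴴ * V = 1 := hV.1
  rw [conj_diagonal_pow_of_mem_unitaryGroup hV, conj_diagonal_pow_of_mem_unitaryGroup hV]
  simp only [conjTranspose_mul, conjTranspose_conjTranspose, diagonal_conjTranspose,
    Matrix.mul_assoc]
  rw [← Matrix.mul_assoc Vᴴ, hVV, Matrix.one_mul, ← Matrix.mul_assoc (diagonal _),
    diagonal_mul_diagonal]
  rfl

end UnitaryDiagonalization

section Correlation

variable {N : ℕ} {R : Type*} [CommRing R] [StarRing R] {V : Matrix (Fin N) (Fin N) R}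

lemma autocorrelation_eq_vandermonde (hV : V ∈ unitaryGroup (Fin N) R) (c y : Fin N → R) :
    (of fun i j : Fin N => star y ⬝ᵥ
        ((((V * diagonal c * Vᴴ) ^ (i : ℕ))ᴴ * (V * diagonal c * Vᴴ) ^ (j : ℕ)) *ᵥ y))
      = (vandermonde c)ᴴ * diagonal (fun k => star ((Vᴴ *ᵥ y) k) * (Vᴴ *ᵥ y) k)
          * vandermonde c := by
  ext i j
  rw [of_apply, conjTranspose_pow_mul_pow_of_mem_unitaryGroup hV,
    star_dotProduct_conj_diagonal_mulVec, mul_apply]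
  refine Finset.sum_congr rfl fun k _ => ?_
  simp only [mul_diagonal, conjTranspose_apply, vandermonde_apply]
  ring

lemma crosscorrelation_eq_vandermonde (hV : V ∈ unitaryGroup (Fin N) R) (c x y : Fin N → R) :
    (fun i : Fin N => star y ⬝ᵥ (((V * diagonal c * Vᴴ) ^ (i : ℕ))ᴴ *ᵥ x))
      = (vandermonde c)ᴴ *ᵥ fun k => star ((Vᴴ *ᵥ y) k) * (Vᴴ *ᵥ x) k := by
  ext i
  have h := conjTranspose_pow_mul_pow_of_mem_unitaryGroup hV c i 0
  simp only [pow_zero, mul_one] at h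
  rw [h, star_dotProduct_conj_diagonal_mulVec, mulVec, dotProduct]
  refine Finset.sum_congr rfl fun k _ => ?_
  simp only [conjTranspose_apply, vandermonde_apply]
  ring

end Correlation

lemma IsPrimitiveRoot.vandermonde_mul_conjTranspose {N : ℕ} [NeZero N] {ζ : ℂ}
    (hζ : IsPrimitiveRoot ζ N) :
    vandermonde (fun k : Fin N => ζ ^ (k : ℕ)) * (vandermonde fun k : Fin N => ζ ^ (k : ℕ))ᴴ
      = (N : ℂ) • 1 := by
  have hζ0 : ζ ≠ 0 := hζ.ne_zero (NeZero.ne N)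
  have hstar : star ζ = ζ⁻¹ := (inv_eq_conj (hζ.norm'_eq_one (NeZero.ne N))).symm
  ext k l
  set μ := ζ ^ (k : ℕ) * (ζ ^ (l : ℕ))⁻¹
  have hterm : ∀ j : Fin N,
      (ζ ^ (k : ℕ)) ^ (j : ℕ) * star ((ζ ^ (l : ℕ)) ^ (j : ℕ)) = μ ^ (j : ℕ) := by
    intro j
    rw [star_pow, star_pow, hstar, inv_pow, mul_pow]
  simp only [mul_apply, vandermonde_apply, conjTranspose_apply, hterm, Matrix.smul_apply,
    one_apply, smul_eq_mul, mul_ite, mul_one, mul_zero]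
  rw [Fin.sum_univ_eq_sum_range (μ ^ ·)]
  split_ifs with hkl
  · simp [μ, hkl, hζ0]
  · have hμ1 : μ ≠ 1 := fun h => hkl <| Fin.ext <|
      hζ.pow_inj k.isLt l.isLt (mul_inv_eq_one₀ (pow_ne_zero _ hζ0) |>.1 h)
    have hμN : μ ^ N = 1 := by
      rw [mul_pow, inv_pow, pow_right_comm ζ (k : ℕ), pow_right_comm ζ (l : ℕ), hζ.pow_eq_one,
        one_pow, one_pow, inv_one, one_mul]
    rw [geom_sum_eq hμ1, hμN, sub_self, zero_div]

section GramSystem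

variable {n K : Type*} [Fintype n] [DecidableEq n] [Field K] [StarRing K]
  {M : Matrix n n K} {s : K}

lemma isUnit_of_mul_conjTranspose_eq_smul_one (hs : s ≠ 0) (hM : M * Mᴴ = s • 1) : IsUnit M :=
  (isUnit_iff_isUnit_det _).2 <| isUnit_det_of_right_inverse (B := s⁻¹ • Mᴴ) <| by
    rw [Matrix.mul_smul, hM, smul_smul, inv_mul_cancel₀ hs, one_smul]

variable {d : n → K}

lemma isUnit_conjTranspose_mul_diagonal_mul (hs : s ≠ 0) (hM : M * Mᴴ = s • 1)
    (hd : ∀ k, d k ≠ 0) : IsUnit (Mᴴ * diagonal d * M) := by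
  have hMunit := isUnit_of_mul_conjTranspose_eq_smul_one hs hM
  exact (((isUnit_conjTranspose M).2 hMunit).mul
    (isUnit_diagonal.2 <| Pi.isUnit_iff.2 fun k => (hd k).isUnit)).mul hMunit

lemma mulVec_apply_eq_div_of_conjTranspose_mul_diagonal_mul_mulVec_eq (hs : s ≠ 0)
    (hM : M * Mᴴ = s • 1) (hd : ∀ k, d k ≠ 0) {h v : n → K}
    (hh : (Mᴴ * diagonal d * M) *ᵥ h = Mᴴ *ᵥ v) (i : n) :
    (M *ᵥ h) i = (M *ᵥ (Mᴴ *ᵥ v)) i / (s * d i) := by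
  have hinj : Function.Injective Mᴴ.mulVec := mulVec_injective_iff_isUnit.2 <|
    (isUnit_conjTranspose M).2 (isUnit_of_mul_conjTranspose_eq_smul_one hs hM)
  have hdiag : diagonal d *ᵥ (M *ᵥ h) = v :=
    hinj <| by simpa only [mulVec_mulVec, Matrix.mul_assoc] using hh
  have hi : d i * (M *ᵥ h) i = v i := by simpa only [mulVec_diagonal] using congrFun hdiag i
  have hMMv : M *ᵥ (Mᴴ *ᵥ v) = s • v := by rw [mulVec_mulVec, hM, smul_mulVec, one_mulVec]
  rw [hMMv, Pi.smul_apply, smul_eq_mul, ← hi]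
  field_simp [hs, hd i]

end GramSystem

lemma exp_neg_two_pi_I_mul_div (N m : ℕ) :
    exp (-2 * Real.pi * I * m / N) = exp (-2 * Real.pi * I / N) ^ m := by
  rw [← exp_nat_mul]; ring_nf

lemma isPrimitiveRoot_exp_neg_two_pi_I_div (N : ℕ) [NeZero N] :
    IsPrimitiveRoot (exp (-2 * Real.pi * I / N)) N := by
  have h : exp (-2 * Real.pi * I / N) = (exp (2 * Real.pi * I / N))⁻¹ := by
    rw [← exp_neg]; ring_nf
  exact h ▸ (isPrimitiveRoot_exp N (NeZero.ne N)).inv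

lemma dft_eq_smul_vandermonde (N : ℕ) :
    (of fun k l : Fin N => (1 / Real.sqrt N : ℂ) *
        exp (-2 * Real.pi * I * (k : ℕ) * (l : ℕ) / N))
      = ((Real.sqrt N : ℝ) : ℂ)⁻¹ •
          vandermonde fun k : Fin N => exp (-2 * Real.pi * I / N) ^ (k : ℕ) := by
  ext k l
  rw [of_apply, Matrix.smul_apply, vandermonde_apply, ← pow_mul, ← exp_neg_two_pi_I_mul_div,
    smul_eq_mul, one_div]
  push_cast; ring_nf

/-- Graph Wiener-Hopf equation for the special shift operator `A_e` with unitary GFT: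
the system `R^G_{yy} h = r^G_{xy}` has a unique solution, given in the DFT domain by
`h_DFT(i) = r_{xy,DFT}(i) / (N |y_F(i)|²)`. -/
theorem stmt_16 {N : ℕ} [NeZero N] (V Ae : Matrix (Fin N) (Fin N) ℂ)
    (hV : V ∈ Matrix.unitaryGroup (Fin N) ℂ)
    (hAe : Ae = V * Matrix.diagonal
      (fun k : Fin N => Complex.exp (-2 * Real.pi * Complex.I * (k : ℕ) / N)) * Vᴴ)
    (x y : Fin N → ℂ) (hy : ∀ n, 0 < ‖(Vᴴ *ᵥ y) n‖)
    (R : Matrix (Fin N) (Fin N) ℂ)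
    (hR : R = fun (i j : Fin N) => star y ⬝ᵥ (((Ae ^ (i : ℕ))ᴴ * Ae ^ (j : ℕ)) *ᵥ y))
    (r : Fin N → ℂ)
    (hr : r = fun (i : Fin N) => star y ⬝ᵥ ((Ae ^ (i : ℕ))ᴴ *ᵥ x))
    (W : Matrix (Fin N) (Fin N) ℂ)
    (hW : W = fun (k l : Fin N) => (1 / Real.sqrt N : ℂ) *
      Complex.exp (-2 * Real.pi * Complex.I * (k : ℕ) * (l : ℕ) / N)) :
    (∃! h : Fin N → ℂ, R *ᵥ h = r) ∧
    ∀ h : Fin N → ℂ, R *ᵥ h = r →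
      ∀ i : Fin N, (W *ᵥ h) i = (W *ᵥ r) i / ((N : ℂ) * (‖(Vᴴ *ᵥ y) i‖ ^ 2 : ℂ)) := by
  set ζ : ℂ := exp (-2 * Real.pi * I / N)
  set M := vandermonde fun k : Fin N => ζ ^ (k : ℕ)
  set yF := Vᴴ *ᵥ y
  have hAe' : Ae = V * diagonal (fun k : Fin N => ζ ^ (k : ℕ)) * Vᴴ := by
    simp only [hAe, exp_neg_two_pi_I_mul_div, ζ]
  have hRM : R = Mᴴ * diagonal (fun k => star (yF k) * yF k) * M := by
    rw [hR, hAe']; exact autocorrelation_eq_vandermonde hV _ y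
  have hrM : r = Mᴴ *ᵥ fun k => star (yF k) * (Vᴴ *ᵥ x) k := by
    rw [hr, hAe']; exact crosscorrelation_eq_vandermonde hV _ x y
  have hWM : W = ((Real.sqrt N : ℝ) : ℂ)⁻¹ • M := hW.trans (dft_eq_smul_vandermonde N)
  have hMM : M * Mᴴ = (N : ℂ) • 1 :=
    (isPrimitiveRoot_exp_neg_two_pi_I_div N).vandermonde_mul_conjTranspose
  have hN : (N : ℂ) ≠ 0 := Nat.cast_ne_zero.2 (NeZero.ne N)
  have hd : ∀ k, star (yF k) * yF k = (‖yF k‖ : ℂ) ^ 2 := fun k => conj_mul' _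
  have hd0 : ∀ k, star (yF k) * yF k ≠ 0 := fun k => by
    rw [hd]; exact pow_ne_zero _ (ofReal_ne_zero.2 (hy k).ne')
  have hunit := isUnit_conjTranspose_mul_diagonal_mul hN hMM hd0
  rw [hRM]
  refine ⟨Function.Bijective.existsUnique
    ⟨mulVec_injective_iff_isUnit.2 hunit, mulVec_surjective_iff_isUnit.2 hunit⟩ r,
    fun h hh i => ?_⟩
  rw [hrM] at hh ⊢
  rw [hWM, smul_mulVec, smul_mulVec, Pi.smul_apply, Pi.smul_apply,
    smul_eq_mul, smul_eq_mul,
    mulVec_apply_eq_div_of_conjTranspose_mul_diagonal_mul_mulVec_eq hN hMM hd0 hh, hd,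
    mul_div_assoc]
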